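/- arXiv:0910.0690 — 4 statements merged into one kernel-verified Lean document; each statement's English description precedes it below -/
import Mathlib

section
/- For all α, β > 0 and every complex number μ with Re μ > 0, one has (α + β) − (β − α)·e^{-2αμ} ≠ 0; consequently the 3×3 matrix Δ₀(μ) is invertible. -/
/-!
The determinant of `Δ₀(μ)` is `(α + β) − (β − α)·e^{-2αμ}`. Since `Re μ > 0`, the exponential
has modulus at most `1`, while `|β − α| < α + β`, so the second term is strictly smaller in
modulus than the first and cannot cancel it.
-/

open Complex

theorem sub_mul_ne_zero_of_norm_lt_of_norm_le_one {𝕜 : Type*} [NormedDivisionRing 𝕜]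
    {a b z : 𝕜} (hba : ‖b‖ < ‖a‖) (hz : ‖z‖ ≤ 1) : a - b * z ≠ 0 := by
  rw [sub_ne_zero]
  rintro rfl
  have : ‖b‖ * ‖z‖ ≤ ‖b‖ := mul_le_of_le_one_right (norm_nonneg b) hz
  rw [norm_mul] at hba
  linarith

theorem Complex.norm_exp_le_one_of_re_nonpos {z : ℂ} (hz : z.re ≤ 0) : ‖exp z‖ ≤ 1 := by
  rw [Complex.norm_exp]
  exact Real.exp_le_one_iff.mpr hz

theorem det_boundaryMatching {R : Type*} [CommRing R] (a b e : R) :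
    (!![1, e, 0; e, 1, -1; -a * e, a, b] : Matrix (Fin 3) (Fin 3) R).det
      = (a + b) - (b - a) * e ^ 2 := by
  rw [Matrix.det_fin_three]
  simp only [Matrix.of_apply, Matrix.cons_val', Matrix.cons_val_zero, Matrix.cons_val_one,
    Matrix.cons_val, Matrix.cons_val_fin_one]
  ring

/-- For α, β > 0 and Re μ > 0, the determinant value
(α + β) − (β − α)·e^{-2αμ} is nonzero, and consequently the 3×3
boundary-matching matrix Δ₀(μ) is invertible. -/
theorem det_boundary_matrix_ne_zero_and_invertible
    (α β : ℝ) (hα : 0 < α) (hβ : 0 < β) (μ : ℂ) (hμ : 0 < μ.re) :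
    ((α : ℂ) + β) - ((β : ℂ) - α) * Complex.exp (-2 * (α : ℂ) * μ) ≠ 0 ∧
    IsUnit
      (!![1, Complex.exp (-(α : ℂ) * μ), 0;
          Complex.exp (-(α : ℂ) * μ), 1, -1;
          -(α : ℂ) * Complex.exp (-(α : ℂ) * μ), (α : ℂ), (β : ℂ)] :
        Matrix (Fin 3) (Fin 3) ℂ) := by
  have hcoeff : ‖((β - α : ℝ) : ℂ)‖ < ‖((α + β : ℝ) : ℂ)‖ := by
    rw [norm_real, norm_real, Real.norm_eq_abs, Real.norm_eq_abs, abs_of_pos (add_pos hα hβ)]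
    exact abs_sub_lt_iff.mpr ⟨by linarith, by linarith⟩
  have hexp : ‖exp (-2 * (α : ℂ) * μ)‖ ≤ 1 := by
    apply norm_exp_le_one_of_re_nonpos
    rw [show -2 * (α : ℂ) * μ = ((-2 * α : ℝ) : ℂ) * μ by push_cast; ring, re_ofReal_mul]
    nlinarith
  have hne := sub_mul_ne_zero_of_norm_lt_of_norm_le_one hcoeff hexp
  push_cast at hne
  have hsq : exp (-(α : ℂ) * μ) ^ 2 = exp (-2 * (α : ℂ) * μ) := by
    rw [← exp_nat_mul]
    ring_nf
  refine ⟨hne, ?_⟩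
  rw [Matrix.isUnit_iff_isUnit_det, det_boundaryMatching, hsq, isUnit_iff_ne_zero]
  exact hne
end

section
/- Let α, β > 0 and let μ be a complex number with Re μ > 0. Then for every φ ∈ ℂ there exist unique complex numbers c₁, c₂, c₃ satisfying the system: c₁ + e^{-αμ} c₂ = φ; e^{-αμ} c₁ + c₂ = c₃; −α e^{-αμ} c₁ + α c₂ = −β c₃. -/
open Complex

/-! Eliminating `c₃` leaves a `2 × 2` system with determinant `(α + β) + (α - β) e^{-2αμ}`.
It cannot vanish: `‖e^{-αμ}‖ = e^{-α Re μ} ≤ 1` and `|α - β| < α + β`. -/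

theorem existsUnique_boundary_matching {K : Type*} [Field K] (a b E φ : K)
    (hdet : (a + b) + (a - b) * E ^ 2 ≠ 0) :
    ∃! c : K × K × K,
      c.1 + E * c.2.1 = φ ∧ E * c.1 + c.2.1 = c.2.2 ∧ -a * E * c.1 + a * c.2.1 = -b * c.2.2 := by
  set d := (a + b) + (a - b) * E ^ 2
  refine ⟨((a + b) * φ / d, (a - b) * E * φ / d, E * ((a + b) * φ / d) + (a - b) * E * φ / d),
    ⟨?_, rfl, ?_⟩, ?_⟩
  · field_simp
    ring
  · field_simp
    ring
  rintro ⟨c₁, c₂, c₃⟩ ⟨h₁, h₂, h₃⟩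
  dsimp only at h₁ h₂ h₃
  have hc₁ : c₁ = (a + b) * φ / d := by
    field_simp
    linear_combination (a + b) * h₁ - E * h₃ - b * E * h₂
  have hc₂ : c₂ = (a - b) * E * φ / d := by
    field_simp
    linear_combination (a - b) * E * h₁ + h₃ + b * h₂
  rw [← h₂, hc₁, hc₂]

theorem add_add_sub_mul_sq_ne_zero {a b : ℝ} (ha : 0 < a) (hb : 0 < b) {E : ℂ} (hE : ‖E‖ ≤ 1) :
    ((a : ℂ) + b) + ((a : ℂ) - b) * E ^ 2 ≠ 0 := by
  intro h
  have hnorm : a + b = |a - b| * ‖E‖ ^ 2 := by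
    have := congrArg (‖·‖) (eq_neg_of_add_eq_zero_right h)
    simpa [← ofReal_add, ← ofReal_sub, abs_of_pos (add_pos ha hb)] using this.symm
  have hE2 : ‖E‖ ^ 2 ≤ 1 := pow_le_one₀ (norm_nonneg E) hE
  have hab : |a - b| < a + b := abs_sub_lt_iff.mpr ⟨by linarith, by linarith⟩
  nlinarith [abs_nonneg (a - b)]

theorem norm_exp_neg_ofReal_mul_le_one {α : ℝ} (hα : 0 ≤ α) {μ : ℂ} (hμ : 0 ≤ μ.re) :
    ‖exp (-(α : ℂ) * μ)‖ ≤ 1 := by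
  rw [norm_exp, Real.exp_le_one_iff]
  simpa using mul_nonneg hα hμ

/-- For α, β > 0, Re μ > 0 and any φ ∈ ℂ, there exist unique c₁, c₂, c₃ ∈ ℂ with
c₁ + e^{-αμ} c₂ = φ, e^{-αμ} c₁ + c₂ = c₃, −α e^{-αμ} c₁ + α c₂ = −β c₃. -/
theorem boundary_matching_system_existsUnique
    (α β : ℝ) (hα : 0 < α) (hβ : 0 < β) (μ : ℂ) (hμ : 0 < μ.re) (φ : ℂ) :
    ∃! c : ℂ × ℂ × ℂ,
      c.1 + Complex.exp (-(α : ℂ) * μ) * c.2.1 = φ ∧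
      Complex.exp (-(α : ℂ) * μ) * c.1 + c.2.1 = c.2.2 ∧
      -(α : ℂ) * Complex.exp (-(α : ℂ) * μ) * c.1 + (α : ℂ) * c.2.1
        = -(β : ℂ) * c.2.2 :=
  existsUnique_boundary_matching _ _ _ φ <| add_add_sub_mul_sq_ne_zero hα hβ <|
    norm_exp_neg_ofReal_mul_le_one hα.le hμ.le
end

section
/- Let α, β > 0, let λ ∈ ℂ with Re λ > 0, let φ ∈ ℂ, and let (c₁, c₂, c₃) be the unique solution of the system c₁ + e^{-αλ} c₂ = φ, e^{-αλ} c₁ + c₂ = c₃, −α e^{-αλ} c₁ + α c₂ = −β c₃. Define u₀ : [0, ∞) → ℂ by u₀(t) = c₁ e^{−αλt} + c₂ e^{−αλ(1−t)} for t ∈ [0, 1] and u₀(t) = c₃ e^{βλ(1−t)} for t ≥ 1. Then: (i) u₀ is continuous on [0, ∞) and continuously differentiable on (0, ∞); (ii) u₀(0) = φ; (iii) u₀''(t) = ρ(t)λ² u₀(t) for all t ∈ (0, 1) ∪ (1, ∞), where ρ(t) = α² on (0,1) and ρ(t) = β² on (1,∞); (iv) u₀ and the function t ↦ ρ(t)λ²u₀(t)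 are square-integrable on (0, ∞). -/
open Complex MeasureTheory Set Filter Topology

/-! On `[0, 1]` and on `[1, ∞)` the ansatz is a combination of `e^{At}` and `e^{A(1-t)}`,
with `A = -αλ` and `A = βλ` respectively, so each piece satisfies `u'' = A² u`. The second and
third matching equations say that the two pieces have the same value and the same slope at
`t = 1`, so gluing them gives a `C¹` function, and `Re λ > 0` makes the tail `c₃ e^{βλ(1-t)}`
decay exponentially, which gives square-integrability. -/

noncomputable def expSolution (A a b : ℂ) (t : ℝ) : ℂ :=
  a * exp (A * t) + b * exp (A * (1 - t))

theorem hasDerivAt_expSolution (A a b : ℂ) (t : ℝ) :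
    HasDerivAt (expSolution A a b) (expSolution A (A * a) (-(A * b)) t) t := by
  have hs : HasDerivAt (fun s : ℝ => (s : ℂ)) 1 t := by
    simpa using (hasDerivAt_id t).ofReal_comp
  have h₁ := ((hs.const_mul A).cexp).const_mul a
  have h₂ := (((hs.const_sub 1).const_mul A).cexp).const_mul b
  have h : HasDerivAt (expSolution A a b) _ t := h₁.add h₂
  refine h.congr_deriv ?_
  simp only [expSolution]
  ring

theorem continuous_expSolution (A a b : ℂ) : Continuous (expSolution A a b) :=
  continuous_iff_continuousAt.2 fun t => (hasDerivAt_expSolution A a b t).continuousAt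

theorem hasDerivAt_expSolution_second (A a b : ℂ) (t : ℝ) :
    HasDerivAt (expSolution A (A * a) (-(A * b))) (A ^ 2 * expSolution A a b t) t := by
  refine (hasDerivAt_expSolution A (A * a) (-(A * b)) t).congr_deriv ?_
  simp only [expSolution]
  ring

theorem integrableOn_Ici_sq_norm_mul_cexp (a : ℂ) {c : ℂ} (hc : 0 < c.re) (b : ℂ)
    (t₀ : ℝ) :
    IntegrableOn (fun t : ℝ => ‖a * exp (c * (b - t))‖ ^ 2) (Ici t₀) := by
  have hdecay :
      IntegrableOn (fun t : ℝ => ‖a ^ 2 * exp (2 * c * b) * exp (-(2 * c) * t)‖) (Ioi t₀) :=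
    ((integrableOn_exp_mul_complex_Ioi (by simpa using hc) t₀).const_mul _).norm
  refine (integrableOn_Ici_iff_integrableOn_Ioi).2
    (hdecay.congr_fun (fun t _ => ?_) measurableSet_Ioi)
  rw [← norm_pow, mul_pow, ← exp_nat_mul]
  dsimp only
  rw [mul_assoc, ← exp_add]
  congr 3
  push_cast
  ring

theorem integrableOn_Ioi_sq_norm_of_exp_tail {h f : ℝ → ℂ} {a b : ℝ} (hab : a < b)
    (hf : ContinuousOn f (Icc a b)) (hhf : EqOn h f (Ioo a b)) (k : ℂ) {c : ℂ} (hc : 0 < c.re)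
    (d : ℂ) (htail : ∀ t, b ≤ t → h t = k * exp (c * (d - t))) :
    IntegrableOn (fun t => ‖h t‖ ^ 2) (Ioi a) := by
  rw [← Ioo_union_Ici_eq_Ioi hab]
  refine IntegrableOn.union ?_ ((integrableOn_Ici_sq_norm_mul_cexp k hc d b).congr_fun
    (fun t ht => by rw [htail t ht]) measurableSet_Ici)
  exact ((hf.norm.pow 2).integrableOn_Icc.mono_set Ioo_subset_Icc_self).congr_fun
    (fun t ht => by simp [hhf ht]) measurableSet_Ioo

theorem eqOn_ite_le {X : Type*} {u f g : ℝ → X} {a b : ℝ} (huf : EqOn u f (Icc a b))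
    (hug : EqOn u g (Ici b)) :
    EqOn u (fun s => if s ≤ b then f s else g s) (Ici a) := by
  intro s (hs : a ≤ s)
  by_cases hsb : s ≤ b
  · simp [hsb, huf ⟨hs, hsb⟩]
  · simp [hsb, hug (le_of_not_ge hsb)]

section Gluing

variable {E : Type*} [NormedAddCommGroup E] [NormedSpace ℝ E] {f g : ℝ → E} {f' : E}
  {b t : ℝ}

theorem hasDerivAt_ite_le_of_lt (hf : HasDerivAt f f' t) (ht : t < b) :
    HasDerivAt (fun s => if s ≤ b then f s else g s) f' t :=
  hf.congr_of_eventuallyEq <| (eventually_le_nhds ht).mono fun _ hs => if_pos hs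

theorem hasDerivAt_ite_le_of_gt (hg : HasDerivAt g f' t) (ht : b < t) :
    HasDerivAt (fun s => if s ≤ b then f s else g s) f' t :=
  hg.congr_of_eventuallyEq <| (eventually_gt_nhds ht).mono fun _ hs => if_neg (not_le.2 hs)

theorem hasDerivAt_ite_le_self (hf : HasDerivAt f f' b) (hg : HasDerivAt g f' b)
    (hfg : f b = g b) : HasDerivAt (fun s => if s ≤ b then f s else g s) f' b := by
  have hleft : HasDerivWithinAt (fun s => if s ≤ b then f s else g s) f' (Iic b) b :=
    hf.hasDerivWithinAt.congr (fun s hs => if_pos hs) (if_pos le_rfl)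
  have hright : HasDerivWithinAt (fun s => if s ≤ b then f s else g s) f' (Ici b) b := by
    refine hg.hasDerivWithinAt.congr (fun s (hs : b ≤ s) => ?_) (by simp [hfg])
    rcases hs.eq_or_lt with rfl | hs
    · simp [hfg]
    · exact if_neg (not_le.2 hs)
  simpa [Iic_union_Ici] using hleft.union hright

theorem hasDerivAt_ite_le {f' g' : ℝ → E} (hf : ∀ t, HasDerivAt f (f' t) t)
    (hg : ∀ t, HasDerivAt g (g' t) t) (hfg : f b = g b) (hfg' : f' b = g' b) (t : ℝ) :
    HasDerivAt (fun s => if s ≤ b then f s else g s) (if t ≤ b then f' t else g' t) t := by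
  rcases lt_trichotomy t b with ht | rfl | ht
  · rw [if_pos ht.le]
    exact hasDerivAt_ite_le_of_lt (hf t) ht
  · rw [if_pos le_rfl]
    exact hasDerivAt_ite_le_self (hf t) (hfg' ▸ hg t) hfg
  · rw [if_neg (not_le.2 ht)]
    exact hasDerivAt_ite_le_of_gt (hg t) ht

theorem continuousOn_and_hasDerivAt_of_eqOn_Icc_Ici {u f' g' : ℝ → E} {a : ℝ}
    (hf : ∀ t, HasDerivAt f (f' t) t) (hg : ∀ t, HasDerivAt g (g' t) t) (hfg : f b = g b)
    (hfg' : f' b = g' b) (huf : EqOn u f (Icc a b)) (hug : EqOn u g (Ici b)) :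
    ContinuousOn u (Ici a) ∧
      ∀ t ∈ Ioi a, HasDerivAt u (if t ≤ b then f' t else g' t) t := by
  have hu := eqOn_ite_le huf hug
  have hderiv := hasDerivAt_ite_le hf hg hfg hfg'
  refine ⟨(continuous_iff_continuousAt.2 fun t => (hderiv t).continuousAt).continuousOn.congr hu,
    fun t ht => (hderiv t).congr_of_eventuallyEq (hu.eventuallyEq_of_mem (Ici_mem_nhds ht))⟩

end Gluing

theorem piecewise_ansatz_is_regular_solution_general
    (α β : ℝ) (hβ : 0 < β) (lam : ℂ) (hlam : 0 < lam.re) (φ : ℂ)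
    (c₁ c₂ c₃ : ℂ)
    (h1 : c₁ + Complex.exp (-(α : ℂ) * lam) * c₂ = φ)
    (h2 : Complex.exp (-(α : ℂ) * lam) * c₁ + c₂ = c₃)
    (h3 : -(α : ℂ) * Complex.exp (-(α : ℂ) * lam) * c₁ + (α : ℂ) * c₂ = -(β : ℂ) * c₃)
    (u₀ : ℝ → ℂ)
    (hdef₁ : ∀ t ∈ Set.Icc (0 : ℝ) 1,
      u₀ t = c₁ * Complex.exp (-(α : ℂ) * lam * t)
           + c₂ * Complex.exp (-(α : ℂ) * lam * (1 - t)))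
    (hdef₂ : ∀ t : ℝ, 1 ≤ t → u₀ t = c₃ * Complex.exp ((β : ℂ) * lam * (1 - t))) :
    -- (i) continuity on [0, ∞) and continuous differentiability on (0, ∞),
    -- together with (iii) u₀'' = ρ(t)λ²u₀ on (0,1) ∪ (1,∞)
    (ContinuousOn u₀ (Set.Ici (0 : ℝ)) ∧
      ∃ v : ℝ → ℂ,
        (∀ t ∈ Set.Ioi (0 : ℝ), HasDerivAt u₀ (v t) t) ∧
        ContinuousOn v (Set.Ioi (0 : ℝ)) ∧
        (∀ t ∈ Set.Ioo (0 : ℝ) 1 ∪ Set.Ioi (1 : ℝ),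
          HasDerivAt v ((if t < 1 then ((α : ℂ) ^ 2) else ((β : ℂ) ^ 2)) * lam ^ 2 * u₀ t) t)) ∧
    -- (ii) the boundary condition
    u₀ 0 = φ ∧
    -- (iv) square-integrability of u₀ and of ρ(t)λ²u₀ on (0, ∞)
    MeasureTheory.IntegrableOn (fun t => ‖u₀ t‖ ^ 2) (Set.Ioi (0 : ℝ)) ∧
    MeasureTheory.IntegrableOn
      (fun t => ‖(if t < 1 then ((α : ℂ) ^ 2) else ((β : ℂ) ^ 2)) * lam ^ 2 * u₀ t‖ ^ 2)
      (Set.Ioi (0 : ℝ)) := by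
  set A : ℂ := -(α : ℂ) * lam
  set B : ℂ := (β : ℂ) * lam
  have hB : 0 < B.re := by simpa [B] using mul_pos hβ hlam
  have hin : EqOn u₀ (expSolution A c₁ c₂) (Icc 0 1) := hdef₁
  have hout : EqOn u₀ (expSolution B 0 c₃) (Ici 1) := fun t ht => by
    simp [expSolution, hdef₂ t ht]
  have hval : expSolution A c₁ c₂ 1 = expSolution B 0 c₃ 1 := by
    simp only [expSolution, ofReal_one, mul_one, sub_self, mul_zero, exp_zero, zero_mul, zero_add]
    linear_combination h2
  have hslope :
      expSolution A (A * c₁) (-(A * c₂)) 1 = expSolution B (B * 0) (-(B * c₃)) 1 := by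
    simp only [expSolution, A, B, ofReal_one, mul_one, sub_self, mul_zero, exp_zero] at h3 ⊢
    linear_combination lam * h3
  obtain ⟨hcont, hderiv⟩ := continuousOn_and_hasDerivAt_of_eqOn_Icc_Ici
    (hasDerivAt_expSolution A c₁ c₂) (hasDerivAt_expSolution B 0 c₃) hval hslope hin hout
  refine ⟨⟨hcont, _, hderiv, ?_, ?_⟩, ?_, ?_, ?_⟩
  · exact (Continuous.if_le (continuous_expSolution _ _ _) (continuous_expSolution _ _ _)
      continuous_id continuous_const fun x (hx : x = 1) => hx ▸ hslope).continuousOn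
  · rintro t (⟨ht₀, ht⟩ | (ht : 1 < t))
    · refine (hasDerivAt_ite_le_of_lt (hasDerivAt_expSolution_second A c₁ c₂ t) ht).congr_deriv
        ?_
      rw [if_pos ht, hin ⟨ht₀.le, ht.le⟩]
      ring
    · refine (hasDerivAt_ite_le_of_gt (hasDerivAt_expSolution_second B 0 c₃ t) ht).congr_deriv
        ?_
      rw [if_neg (not_lt.2 ht.le), hout ht.le]
      ring
  · rw [hin ⟨le_rfl, zero_le_one⟩]
    simp only [expSolution, ofReal_zero, mul_zero, exp_zero, mul_one, sub_zero]
    linear_combination h1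
  · exact integrableOn_Ioi_sq_norm_of_exp_tail zero_lt_one (hcont.mono Icc_subset_Ici_self)
      (eqOn_refl _ _) c₃ hB 1 hdef₂
  · refine integrableOn_Ioi_sq_norm_of_exp_tail (f := fun t => (α : ℂ) ^ 2 * lam ^ 2 * u₀ t)
      zero_lt_one (continuousOn_const.mul (hcont.mono Icc_subset_Ici_self))
      (fun t ht => by simp only [if_pos ht.2]) ((β : ℂ) ^ 2 * lam ^ 2 * c₃) hB 1 fun t ht => ?_
    rw [if_neg (not_lt.2 ht), hdef₂ t ht]
    ring

/-- Properties of the piecewise regular solution ansatz u₀ built from the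
solution (c₁, c₂, c₃) of the boundary-matching system: u₀ is continuous on
[0, ∞) and continuously differentiable on (0, ∞), satisfies u₀(0) = φ, solves
u₀'' = ρ(t)λ²u₀ on (0,1) ∪ (1,∞) where ρ = α² on (0,1) and β² on (1,∞), and
both u₀ and ρλ²u₀ are square-integrable on (0, ∞). -/
theorem piecewise_ansatz_is_regular_solution
    (α β : ℝ) (hα : 0 < α) (hβ : 0 < β) (lam : ℂ) (hlam : 0 < lam.re) (φ : ℂ)
    (c₁ c₂ c₃ : ℂ)
    (h1 : c₁ + Complex.exp (-(α : ℂ) * lam) * c₂ = φ)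
    (h2 : Complex.exp (-(α : ℂ) * lam) * c₁ + c₂ = c₃)
    (h3 : -(α : ℂ) * Complex.exp (-(α : ℂ) * lam) * c₁ + (α : ℂ) * c₂ = -(β : ℂ) * c₃)
    (u₀ : ℝ → ℂ)
    (hdef₁ : ∀ t ∈ Set.Icc (0 : ℝ) 1,
      u₀ t = c₁ * Complex.exp (-(α : ℂ) * lam * t)
           + c₂ * Complex.exp (-(α : ℂ) * lam * (1 - t)))
    (hdef₂ : ∀ t : ℝ, 1 ≤ t → u₀ t = c₃ * Complex.exp ((β : ℂ) * lam * (1 - t))) :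
    -- (i) continuity on [0, ∞) and continuous differentiability on (0, ∞),
    -- together with (iii) u₀'' = ρ(t)λ²u₀ on (0,1) ∪ (1,∞)
    (ContinuousOn u₀ (Set.Ici (0 : ℝ)) ∧
      ∃ v : ℝ → ℂ,
        (∀ t ∈ Set.Ioi (0 : ℝ), HasDerivAt u₀ (v t) t) ∧
        ContinuousOn v (Set.Ioi (0 : ℝ)) ∧
        (∀ t ∈ Set.Ioo (0 : ℝ) 1 ∪ Set.Ioi (1 : ℝ),
          HasDerivAt v ((if t < 1 then ((α : ℂ) ^ 2) else ((β : ℂ) ^ 2)) * lam ^ 2 * u₀ t) t)) ∧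
    -- (ii) the boundary condition
    u₀ 0 = φ ∧
    -- (iv) square-integrability of u₀ and of ρ(t)λ²u₀ on (0, ∞)
    MeasureTheory.IntegrableOn (fun t => ‖u₀ t‖ ^ 2) (Set.Ioi (0 : ℝ)) ∧
    MeasureTheory.IntegrableOn
      (fun t => ‖(if t < 1 then ((α : ℂ) ^ 2) else ((β : ℂ) ^ 2)) * lam ^ 2 * u₀ t‖ ^ 2)
      (Set.Ioi (0 : ℝ)) :=
  piecewise_ansatz_is_regular_solution_general α β hβ lam hlam φ c₁ c₂ c₃ h1 h2 h3 u₀ hdef₁ hdef₂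
end

section
/- Let α, β > 0, let λ ∈ ℂ with Re λ > 0, and let φ ∈ ℂ. Then there exists exactly one function u : [0, ∞) → ℂ such that: u is continuous on [0, ∞) with u(0) = φ; u is continuously differentiable on (0, ∞); u is twice differentiable on (0,1) ∪ (1,∞) with u''(t) = ρ(t)λ² u(t) there, where ρ(t) = α² on (0,1) and ρ(t) = β² on (1,∞); and u is square-integrable on (0, ∞). -/
/-!
On each of `(0, 1)` and `(1, ∞)` the equation `u'' = z² u` (with `z = αλ`, resp. `ζ = βλ`, both
in the right half-plane) has exactly the solutions `a e^{zt} + b e^{-zt}`, because the first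
integrals `e^{∓zt} (u' ± z u)` are constant. Square integrability kills the growing mode on
`(1, ∞)`, and `u(0) = φ` together with continuity of `u` and `u'` at `t = 1` leaves a linear system
for the three remaining coefficients. Its determinant is `(z + ζ) e^z + (z - ζ) e^{-z}`, which
cannot vanish since `|z - ζ| < |z + ζ|` and `|e^{-z}| < |e^z|`.
-/

open Complex MeasureTheory Set Filter

theorem hasDerivAt_cexp_mul_ofReal (c : ℂ) (t : ℝ) :
    HasDerivAt (fun t : ℝ => cexp (c * t)) (c * cexp (c * t)) t := by
  simpa [mul_comm] using ((hasDerivAt_id t).ofReal_comp.const_mul c).cexp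

theorem not_integrableOn_Ioi_of_tendsto_norm_atTop {E : Type*} [NormedAddCommGroup E]
    {f : ℝ → E} (hf : Tendsto (fun t => ‖f t‖) atTop atTop) (T : ℝ) :
    ¬ IntegrableOn f (Ioi T) := by
  intro hint
  obtain ⟨M, hM⟩ := eventually_atTop.1 (hf.eventually_ge_atTop 1)
  have hone : IntegrableOn (fun _ => (1 : ℝ)) (Ioi (max M T)) := by
    refine (hint.mono_set (Ioi_subset_Ioi (le_max_right _ _))).norm.mono'
      aestronglyMeasurable_const ?_
    filter_upwards [ae_restrict_mem measurableSet_Ioi] with t ht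
    simpa using hM t ((le_max_left _ _).trans ht.le)
  simp [integrableOn_const_iff] at hone

section Gluing

variable {E : Type*} [NormedAddCommGroup E] [NormedSpace ℝ E] {F G F' G' : ℝ → E} {x₀ : ℝ}

theorem hasDerivAt_ite_le_of_ne {t : ℝ} (hF : HasDerivAt F (F' t) t) (hG : HasDerivAt G (G' t) t)
    (ht : t ≠ x₀) :
    HasDerivAt (fun s => if s ≤ x₀ then F s else G s) (if t ≤ x₀ then F' t else G' t) t := by
  rcases ht.lt_or_gt with ht | ht
  · rw [if_pos ht.le]
    refine hF.congr_of_eventuallyEq ?_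
    filter_upwards [Iio_mem_nhds ht] with s hs using if_pos (le_of_lt hs)
  · rw [if_neg ht.not_ge]
    refine hG.congr_of_eventuallyEq ?_
    filter_upwards [Ioi_mem_nhds ht] with s hs using if_neg (not_le.2 hs)

theorem hasDerivAt_ite_le_s11 (hF : ∀ t, HasDerivAt F (F' t) t) (hG : ∀ t, HasDerivAt G (G' t) t)
    (h₀ : F x₀ = G x₀) (h₁ : F' x₀ = G' x₀) (t : ℝ) :
    HasDerivAt (fun s => if s ≤ x₀ then F s else G s) (if t ≤ x₀ then F' t else G' t) t := by
  rcases eq_or_ne t x₀ with rfl | ht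
  · rw [if_pos le_rfl]
    have hleft : HasDerivWithinAt (fun s => if s ≤ t then F s else G s) (F' t) (Iic t) t :=
      (hF t).hasDerivWithinAt.congr (fun s hs => if_pos hs) (if_pos le_rfl)
    have hright : HasDerivWithinAt (fun s => if s ≤ t then F s else G s) (F' t) (Ici t) t := by
      rw [h₁]
      refine (hG t).hasDerivWithinAt.congr (fun s hs => ?_) (by simp [h₀])
      rcases (mem_Ici.1 hs).eq_or_lt with rfl | hs
      · simp [h₀]
      · simp [hs.not_ge]
    simpa using hleft.union hright
  · exact hasDerivAt_ite_le_of_ne (hF t) (hG t) ht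

end Gluing

noncomputable def expCombo (μ a b : ℂ) (t : ℝ) : ℂ := a * cexp (μ * t) + b * cexp (-(μ * t))

namespace expCombo

variable (μ a b : ℂ)

theorem hasDerivAt (t : ℝ) :
    HasDerivAt (expCombo μ a b) (expCombo μ (μ * a) (-(μ * b)) t) t := by
  have h := ((hasDerivAt_cexp_mul_ofReal μ t).const_mul a).add
    ((hasDerivAt_cexp_mul_ofReal (-μ) t).const_mul b)
  simp only [neg_mul] at h
  exact h.congr_deriv (by simp only [expCombo]; ring)

theorem hasDerivAt_second (t : ℝ) :
    HasDerivAt (expCombo μ (μ * a) (-(μ * b))) (μ ^ 2 * expCombo μ a b t) t :=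
  (hasDerivAt μ _ _ t).congr_deriv (by simp only [expCombo]; ring)

theorem continuous : Continuous (expCombo μ a b) := by
  unfold expCombo; fun_prop

theorem norm_zero_left (t : ℝ) : ‖expCombo μ 0 b t‖ = ‖b‖ * Real.exp (-(μ.re * t)) := by
  simp [expCombo, Complex.norm_exp]

theorem tendsto_norm_atTop (hμ : 0 < μ.re) (ha : a ≠ 0) :
    Tendsto (fun t => ‖expCombo μ a b t‖) atTop atTop := by
  have hlower (t : ℝ) :
      ‖a‖ * Real.exp (μ.re * t) - ‖b‖ * Real.exp (-(μ.re * t)) ≤ ‖expCombo μ a b t‖ := by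
    simpa [expCombo, Complex.norm_exp] using
      norm_sub_norm_le (a * cexp (μ * t)) (-(b * cexp (-(μ * t))))
  refine tendsto_atTop_mono hlower ?_
  have hlin : Tendsto (fun t : ℝ => μ.re * t) atTop atTop := tendsto_id.const_mul_atTop hμ
  simpa [sub_eq_add_neg] using
    ((Real.tendsto_exp_atTop.comp hlin).const_mul_atTop (norm_pos_iff.2 ha)).atTop_add
      ((Real.tendsto_exp_atBot.comp (tendsto_neg_atTop_atBot.comp hlin)).const_mul ‖b‖).neg

theorem integrableOn_sq_norm_iff (hμ : 0 < μ.re) (T : ℝ) :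
    IntegrableOn (fun t => ‖expCombo μ a b t‖ ^ 2) (Ioi T) ↔ a = 0 := by
  constructor
  · intro h
    by_contra ha
    refine not_integrableOn_Ioi_of_tendsto_norm_atTop ?_ T h
    simpa only [norm_pow, norm_norm, Function.comp_def] using
      (tendsto_pow_atTop two_ne_zero).comp (tendsto_norm_atTop μ a b hμ ha)
  · rintro rfl
    have hexp := exp_neg_integrableOn_Ioi T (by positivity : 0 < 2 * μ.re)
    refine IntegrableOn.congr_fun (hexp.const_mul (‖b‖ ^ 2)) (fun t _ => ?_) measurableSet_Ioi
    rw [norm_zero_left, mul_pow, ← Real.exp_nat_mul]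
    ring_nf

end expCombo

theorem hasDerivAt_cexp_neg_mul_add_mul_eq_zero {μ : ℂ} {f g : ℝ → ℂ} {t : ℝ}
    (hf : HasDerivAt f (g t) t) (hg : HasDerivAt g (μ ^ 2 * f t) t) :
    HasDerivAt (fun t : ℝ => cexp (-μ * t) * (g t + μ * f t)) 0 t :=
  ((hasDerivAt_cexp_mul_ofReal (-μ) t).mul (hg.add (hf.const_mul μ))).congr_deriv
    (by simp only [Pi.add_apply]; ring)

theorem exists_eqOn_expCombo_of_hasDerivAt {μ : ℂ} (hμ : μ ≠ 0) {s : Set ℝ} (hs : IsOpen s)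
    (hs' : IsPreconnected s) {f g : ℝ → ℂ} (hf : ∀ t ∈ s, HasDerivAt f (g t) t)
    (hg : ∀ t ∈ s, HasDerivAt g (μ ^ 2 * f t) t) :
    ∃ a b, EqOn f (expCombo μ a b) s ∧ EqOn g (expCombo μ (μ * a) (-(μ * b))) s := by
  have hconst (ν : ℂ) (hν : ∀ t ∈ s, HasDerivAt g (ν ^ 2 * f t) t) :
      ∃ c, ∀ t ∈ s, cexp (-ν * t) * (g t + ν * f t) = c := by
    have hd (t) (ht : t ∈ s) := hasDerivAt_cexp_neg_mul_add_mul_eq_zero (hf t ht) (hν t ht)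
    exact hs.exists_is_const_of_deriv_eq_zero hs'
      (fun t ht => (hd t ht).differentiableAt.differentiableWithinAt)
      (fun t ht => (hd t ht).deriv)
  obtain ⟨p, hp⟩ := hconst μ hg
  obtain ⟨q, hq⟩ := hconst (-μ) (by simpa only [neg_sq] using hg)
  simp only [neg_mul, neg_neg] at hp hq
  have hE (t : ℝ) : cexp (μ * t) * cexp (-(μ * t)) = 1 := by rw [← Complex.exp_add]; simp
  refine ⟨p / (2 * μ), -q / (2 * μ), fun t ht => ?_, fun t ht => ?_⟩ <;>
    simp only [expCombo] <;> field_simp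
  · linear_combination cexp (μ * t) * hp t ht - cexp (-(μ * t)) * hq t ht - 2 * μ * f t * hE t
  · linear_combination cexp (μ * t) * hp t ht + cexp (-(μ * t)) * hq t ht - 2 * g t * hE t

noncomputable def transmissionDet (z ζ : ℂ) : ℂ := (z + ζ) * cexp z + (z - ζ) * cexp (-z)

theorem transmissionDet_ne_zero {z ζ : ℂ} (hz : 0 < z.re) (h : ‖z - ζ‖ < ‖z + ζ‖) :
    transmissionDet z ζ ≠ 0 := by
  intro hD
  have hnorm : ‖z + ζ‖ * Real.exp z.re = ‖z - ζ‖ * Real.exp (-z.re) := by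
    simpa [norm_mul, Complex.norm_exp] using congrArg norm (eq_neg_of_add_eq_zero_left hD)
  have : ‖z - ζ‖ * Real.exp (-z.re) < ‖z + ζ‖ * Real.exp z.re :=
    calc ‖z - ζ‖ * Real.exp (-z.re) ≤ ‖z - ζ‖ * Real.exp z.re := by gcongr; linarith
      _ < ‖z + ζ‖ * Real.exp z.re := by gcongr
  linarith

theorem transmissionDet_ofReal_mul_ne_zero {α β : ℝ} (hα : 0 < α) (hβ : 0 < β) {lam : ℂ}
    (hlam : 0 < lam.re) : transmissionDet (α * lam) (β * lam) ≠ 0 := by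
  have hlam0 : lam ≠ 0 := by rintro rfl; simp at hlam
  refine transmissionDet_ne_zero (by simpa using mul_pos hα hlam) ?_
  rw [← sub_mul, ← add_mul, norm_mul, norm_mul, ← ofReal_sub, ← ofReal_add, norm_real, norm_real,
    Real.norm_eq_abs, Real.norm_eq_abs, abs_of_pos (add_pos hα hβ)]
  exact mul_lt_mul_of_pos_right (abs_sub_lt_iff.2 ⟨by linarith, by linarith⟩) (norm_pos_iff.2 hlam0)

/-- The two profiles agree to first order at `t = 1`: the second conjunct compares derivatives
(cf. `expCombo.hasDerivAt`). -/
def TransmissionConditions (z ζ a b a' b' : ℂ) : Prop :=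
  expCombo z a b 1 = expCombo ζ a' b' 1 ∧
    expCombo z (z * a) (-(z * b)) 1 = expCombo ζ (ζ * a') (-(ζ * b')) 1

theorem add_eq_and_transmissionConditions_iff {z ζ : ℂ} (hD : transmissionDet z ζ ≠ 0)
    {φ a b c : ℂ} :
    a + b = φ ∧ TransmissionConditions z ζ a b 0 c ↔
      a = φ * (z - ζ) * cexp (-z) / transmissionDet z ζ ∧
      b = φ * (z + ζ) * cexp z / transmissionDet z ζ ∧
      c = 2 * z * φ * cexp ζ / transmissionDet z ζ := by
  have hEz : cexp z * cexp (-z) = 1 := by rw [← Complex.exp_add]; simp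
  have hEζ : cexp ζ * cexp (-ζ) = 1 := by rw [← Complex.exp_add]; simp
  simp only [TransmissionConditions, expCombo, ofReal_one, mul_one, zero_mul, mul_zero, zero_add]
  constructor
  · rintro ⟨hab, hval, hder⟩
    have hkey : (z + ζ) * a * cexp z = (z - ζ) * b * cexp (-z) := by
      linear_combination hder + ζ * hval
    have ha : a * transmissionDet z ζ = φ * (z - ζ) * cexp (-z) := by
      rw [transmissionDet]
      linear_combination hkey + (z - ζ) * cexp (-z) * hab
    have hb : b * transmissionDet z ζ = φ * (z + ζ) * cexp z := by
      rw [transmissionDet]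
      linear_combination -hkey + (z + ζ) * cexp z * hab
    have hc : c * transmissionDet z ζ = 2 * z * φ * cexp ζ := by
      linear_combination -c * transmissionDet z ζ * hEζ - cexp ζ * transmissionDet z ζ * hval
        + cexp ζ * cexp z * ha + cexp ζ * cexp (-z) * hb + 2 * z * φ * cexp ζ * hEz
    exact ⟨(eq_div_iff hD).2 ha, (eq_div_iff hD).2 hb, (eq_div_iff hD).2 hc⟩
  · rintro ⟨rfl, rfl, rfl⟩
    refine ⟨?_, ?_, ?_⟩ <;> field_simp
    · rw [transmissionDet]; ring
    · linear_combination 2 * z * φ * hEz - 2 * z * φ * hEζ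
    · linear_combination -2 * z * ζ * φ * hEz + 2 * z * ζ * φ * hEζ

def IsRegularSolution (α β : ℝ) (lam φ : ℂ) (u : ℝ → ℂ) : Prop :=
  ContinuousOn u (Ici 0) ∧ u 0 = φ ∧
    (∃ v : ℝ → ℂ,
      (∀ t ∈ Ioi (0 : ℝ), HasDerivAt u (v t) t) ∧
      ContinuousOn v (Ioi 0) ∧
      (∀ t ∈ Ioo (0 : ℝ) 1 ∪ Ioi 1,
        HasDerivAt v ((if t < 1 then (α : ℂ) ^ 2 else (β : ℂ) ^ 2) * lam ^ 2 * u t) t)) ∧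
    IntegrableOn (fun t => ‖u t‖ ^ 2) (Ioi 0)

noncomputable def piecewiseExpCombo (z ζ a b a' b' : ℂ) (t : ℝ) : ℂ :=
  if t ≤ 1 then expCombo z a b t else expCombo ζ a' b' t

namespace piecewiseExpCombo

variable {z ζ a b a' b' : ℂ}

theorem continuous (h : expCombo z a b 1 = expCombo ζ a' b' 1) :
    Continuous (piecewiseExpCombo z ζ a b a' b') :=
  Continuous.if_le (expCombo.continuous _ _ _) (expCombo.continuous _ _ _) continuous_id
    continuous_const fun t ht => by rw [ht]; exact h

theorem hasDerivAt (h : TransmissionConditions z ζ a b a' b') (t : ℝ) :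
    HasDerivAt (piecewiseExpCombo z ζ a b a' b')
      (piecewiseExpCombo z ζ (z * a) (-(z * b)) (ζ * a') (-(ζ * b')) t) t :=
  hasDerivAt_ite_le_s11 (expCombo.hasDerivAt z a b) (expCombo.hasDerivAt ζ a' b') h.1 h.2 t

theorem hasDerivAt_second {t : ℝ} (ht : t ≠ 1) :
    HasDerivAt (piecewiseExpCombo z ζ (z * a) (-(z * b)) (ζ * a') (-(ζ * b')))
      ((if t < 1 then z ^ 2 else ζ ^ 2) * piecewiseExpCombo z ζ a b a' b' t) t := by
  refine (hasDerivAt_ite_le_of_ne (F' := fun t => z ^ 2 * expCombo z a b t)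
    (G' := fun t => ζ ^ 2 * expCombo ζ a' b' t) (expCombo.hasDerivAt_second z a b t)
    (expCombo.hasDerivAt_second ζ a' b' t) ht).congr_deriv ?_
  rcases ht.lt_or_gt with ht | ht
  · simp [piecewiseExpCombo, ht, ht.le]
  · simp [piecewiseExpCombo, ht.not_ge, ht.not_gt]

end piecewiseExpCombo

theorem isRegularSolution_piecewiseExpCombo {α β : ℝ} (hβ : 0 < β) {lam φ a b c : ℂ}
    (hlam : 0 < lam.re) (h₀ : a + b = φ) (hT : TransmissionConditions (α * lam) (β * lam) a b 0 c) :
    IsRegularSolution α β lam φ (piecewiseExpCombo (α * lam) (β * lam) a b 0 c) := by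
  have hu := piecewiseExpCombo.hasDerivAt hT
  refine ⟨(continuous_iff_continuousAt.2 fun t => (hu t).continuousAt).continuousOn, ?_,
    ⟨_, fun t _ => hu t, (piecewiseExpCombo.continuous hT.2).continuousOn, fun t ht => ?_⟩, ?_⟩
  · simpa [piecewiseExpCombo, expCombo] using h₀
  · have ht1 : t ≠ 1 := by rintro rfl; simp at ht
    refine (piecewiseExpCombo.hasDerivAt_second (z := α * lam) (ζ := β * lam) (a := a) (b := b)
      (a' := 0) (b' := c) ht1).congr_deriv ?_
    split_ifs <;> ring
  · rw [← Ioc_union_Ioi_eq_Ioi zero_le_one]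
    refine ((continuous_iff_continuousAt.2 fun t => (hu t).continuousAt).norm.pow 2
      |>.integrableOn_Ioc).union ?_
    have hdecay := (expCombo.integrableOn_sq_norm_iff (β * lam) 0 c
      (by simpa using mul_pos hβ hlam) 1).2 rfl
    refine hdecay.congr_fun (fun t ht => ?_) measurableSet_Ioi
    simp [piecewiseExpCombo, (mem_Ioi.1 ht).not_ge]

theorem IsRegularSolution.exists_eqOn_piecewiseExpCombo {α β : ℝ} (hα : α ≠ 0) (hβ : 0 < β)
    {lam φ : ℂ} (hlam : 0 < lam.re) {w : ℝ → ℂ} (hw : IsRegularSolution α β lam φ w) :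
    ∃ a b c, a + b = φ ∧ TransmissionConditions (α * lam) (β * lam) a b 0 c ∧
      EqOn w (piecewiseExpCombo (α * lam) (β * lam) a b 0 c) (Ici 0) := by
  obtain ⟨hwc, hw0, ⟨v, hwv, hvc, hode⟩, hL2⟩ := hw
  have hlam0 : lam ≠ 0 := by rintro rfl; simp at hlam
  obtain ⟨a, b, hwl, hvl⟩ := exists_eqOn_expCombo_of_hasDerivAt
    (mul_ne_zero (ofReal_ne_zero.2 hα) hlam0) (isOpen_Ioo (a := 0) (b := 1)) isPreconnected_Ioo
    (fun t ht => hwv t ht.1) fun t ht => by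
      simpa only [if_pos (mem_Ioo.1 ht).2, mul_pow] using hode t (.inl ht)
  obtain ⟨a', c, hwr, hvr⟩ := exists_eqOn_expCombo_of_hasDerivAt
    (mul_ne_zero (ofReal_ne_zero.2 hβ.ne') hlam0) (isOpen_Ioi (a := 1)) isPreconnected_Ioi
    (fun t ht => hwv t (zero_lt_one.trans (mem_Ioi.1 ht))) fun t ht => by
      simpa only [if_neg (not_lt.2 (mem_Ioi.1 ht).le), mul_pow] using hode t (.inr ht)
  obtain rfl : a' = 0 := by
    refine (expCombo.integrableOn_sq_norm_iff (β * lam) a' c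
      (by simpa using mul_pos hβ hlam) 1).1 ?_
    exact (hL2.mono_set (Ioi_subset_Ioi zero_le_one)).congr_fun (fun t ht => by simp only [hwr ht])
      measurableSet_Ioi
  have hcl : Icc (0 : ℝ) 1 ⊆ closure (Ioo 0 1) := (closure_Ioo zero_ne_one).ge
  have hwl' := hwl.of_subset_closure (hwc.mono Icc_subset_Ici_self)
    (expCombo.continuous _ _ _).continuousOn Ioo_subset_Icc_self hcl
  have hvl' := hvl.of_subset_closure (hvc.mono Ioc_subset_Ioi_self)
    (expCombo.continuous _ _ _).continuousOn Ioo_subset_Ioc_self (Ioc_subset_Icc_self.trans hcl)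
  have hwr' := hwr.of_subset_closure (hwc.mono (Ici_subset_Ici.2 zero_le_one))
    (expCombo.continuous _ _ _).continuousOn Ioi_subset_Ici_self (closure_Ioi 1).ge
  have hvr' := hvr.of_subset_closure (hvc.mono fun t (ht : 1 ≤ t) => zero_lt_one.trans_le ht)
    (expCombo.continuous _ _ _).continuousOn Ioi_subset_Ici_self (closure_Ioi 1).ge
  refine ⟨a, b, c, ?_, ⟨(hwl' ⟨zero_le_one, le_rfl⟩).symm.trans (hwr' self_mem_Ici),
    (hvl' ⟨zero_lt_one, le_rfl⟩).symm.trans (hvr' self_mem_Ici)⟩, fun t ht => ?_⟩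
  · simpa [expCombo, hw0] using (hwl' ⟨le_rfl, zero_le_one⟩).symm
  · unfold piecewiseExpCombo
    split_ifs with h
    · exact hwl' ⟨ht, h⟩
    · exact hwr' (le_of_not_ge h)

/-- Scalar regular solvability: for α, β > 0, Re λ > 0 and φ ∈ ℂ there is
exactly one function u on [0, ∞) which is continuous on [0, ∞) with u(0) = φ,
continuously differentiable on (0, ∞), twice differentiable on (0,1) ∪ (1,∞)
with u'' = ρ(t)λ²u there (ρ = α² on (0,1), β² on (1,∞)), and square-integrable
on (0, ∞). Uniqueness is understood on [0, ∞). -/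
theorem scalar_regular_solvability
    (α β : ℝ) (hα : 0 < α) (hβ : 0 < β) (lam : ℂ) (hlam : 0 < lam.re) (φ : ℂ) :
    ∃ u : ℝ → ℂ,
      (ContinuousOn u (Set.Ici (0 : ℝ)) ∧ u 0 = φ ∧
        (∃ v : ℝ → ℂ,
          (∀ t ∈ Set.Ioi (0 : ℝ), HasDerivAt u (v t) t) ∧
          ContinuousOn v (Set.Ioi (0 : ℝ)) ∧
          (∀ t ∈ Set.Ioo (0 : ℝ) 1 ∪ Set.Ioi (1 : ℝ),
            HasDerivAt v
              ((if t < 1 then ((α : ℂ) ^ 2) else ((β : ℂ) ^ 2)) * lam ^ 2 * u t) t)) ∧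
        MeasureTheory.IntegrableOn (fun t => ‖u t‖ ^ 2) (Set.Ioi (0 : ℝ))) ∧
      ∀ w : ℝ → ℂ,
        (ContinuousOn w (Set.Ici (0 : ℝ)) ∧ w 0 = φ ∧
          (∃ v : ℝ → ℂ,
            (∀ t ∈ Set.Ioi (0 : ℝ), HasDerivAt w (v t) t) ∧
            ContinuousOn v (Set.Ioi (0 : ℝ)) ∧
            (∀ t ∈ Set.Ioo (0 : ℝ) 1 ∪ Set.Ioi (1 : ℝ),
              HasDerivAt v
                ((if t < 1 then ((α : ℂ) ^ 2) else ((β : ℂ) ^ 2)) * lam ^ 2 * w t) t)) ∧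
          MeasureTheory.IntegrableOn (fun t => ‖w t‖ ^ 2) (Set.Ioi (0 : ℝ))) →
        ∀ t ∈ Set.Ici (0 : ℝ), w t = u t := by
  have hD := transmissionDet_ofReal_mul_ne_zero hα hβ hlam
  obtain ⟨h₀, hT⟩ := (add_eq_and_transmissionConditions_iff hD).2 ⟨rfl, rfl, rfl⟩
  refine ⟨_, isRegularSolution_piecewiseExpCombo hβ hlam h₀ hT, fun w hw t ht => ?_⟩
  obtain ⟨a, b, c, hab, hwT, hw_eq⟩ :=
    IsRegularSolution.exists_eqOn_piecewiseExpCombo hα.ne' hβ hlam hw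
  obtain ⟨rfl, rfl, rfl⟩ := (add_eq_and_transmissionConditions_iff hD).1 ⟨hab, hwT⟩
  exact hw_eq ht
end
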